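/- arXiv:1701.08652 — 7 statements merged into one kernel-verified Lean document; each statement's English description precedes it below -/
import Mathlib

section
/- For every n ≥ 2, the product over all cells (i,j) with 1 ≤ i ≤ n and 1 ≤ j ≤ n+1-i of c_n(i,j)/h_n(i,j), where c_n(i,j) = n-i+j and h_n(i,j) = 2(n-i-j)+3, equals 2^(n choose 2). -/
/-!
Row `i` of the staircase has `m + 1` cells with `m = n - i`; its contents are `m + 1, …, 2m + 1`
and its hook lengths are the odd numbers `1, 3, …, 2m + 1`. Since
`(2m + 1)! = (2m + 1)‼ · (2m)‼ = (2m + 1)‼ · 2^m · m!`, the row contributes exactly `2^m`,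
and `∑_{m < n} m = n choose 2`.
-/

open Finset
open scoped Nat

theorem Nat.ascFactorial_succ_succ_eq_two_pow_mul_doubleFactorial (m : ℕ) :
    (m + 1).ascFactorial (m + 1) = 2 ^ m * (2 * m + 1)‼ := by
  apply Nat.eq_of_mul_eq_mul_left (Nat.factorial_pos m)
  rw [Nat.factorial_mul_ascFactorial, show m + (m + 1) = 2 * m + 1 by ring,
    Nat.factorial_eq_mul_doubleFactorial, Nat.doubleFactorial_two_mul]
  ring

theorem Finset.prod_Icc_one_sub_eq_prod_range {M : Type*} [CommMonoid M] (f : ℕ → M) (n : ℕ) :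
    ∏ i ∈ Icc 1 n, f (n - i) = ∏ i ∈ range n, f i := by
  rw [← Ico_add_one_right_eq_Icc, prod_Ico_reflect f 1 le_rfl, Nat.sub_self,
    Nat.add_sub_cancel, range_eq_Ico]

theorem prod_Icc_add_eq_ascFactorial (m : ℕ) :
    ∏ j ∈ Icc 1 (m + 1), ((m : ℚ) + j) = ((m + 1).ascFactorial (m + 1) : ℚ) := by
  rw [Nat.ascFactorial_eq_prod_range, ← Ico_add_one_right_eq_Icc, prod_Ico_eq_prod_range]
  push_cast
  refine prod_congr rfl fun k _ => ?_
  ring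

theorem prod_Icc_hookLength_eq_doubleFactorial (m : ℕ) :
    ∏ j ∈ Icc 1 (m + 1), (2 * ((m : ℚ) - j) + 3) = ((2 * m + 1)‼ : ℚ) := by
  have hook_eq_odd : ∀ j ∈ Icc 1 (m + 1),
      2 * ((m : ℚ) - j) + 3 = 2 * ((m + 1 - j : ℕ) : ℚ) + 1 := by
    intro j hj
    rw [Nat.cast_sub (mem_Icc.1 hj).2]
    push_cast
    ring
  rw [prod_congr rfl hook_eq_odd, prod_Icc_one_sub_eq_prod_range (fun k => 2 * (k : ℚ) + 1),
    prod_range_succ', Nat.doubleFactorial_eq_prod_odd]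
  push_cast
  simp only [mul_zero, zero_add, mul_one]

theorem prod_staircase_row (m : ℕ) :
    ∏ j ∈ Icc 1 (m + 1), (((m : ℚ) + j) / (2 * ((m : ℚ) - j) + 3)) = 2 ^ m := by
  have hdf : ((2 * m + 1)‼ : ℚ) ≠ 0 := by exact_mod_cast (Nat.doubleFactorial_pos _).ne'
  rw [prod_div_distrib, prod_Icc_add_eq_ascFactorial, prod_Icc_hookLength_eq_doubleFactorial,
    Nat.ascFactorial_succ_succ_eq_two_pow_mul_doubleFactorial]
  push_cast
  exact mul_div_cancel_right₀ _ hdf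

theorem hook_content_formula_staircase_general (n : ℕ) :
    ∏ i ∈ Finset.Icc 1 n, ∏ j ∈ Finset.Icc 1 (n + 1 - i),
      (((n : ℚ) - i + j) / (2 * ((n : ℚ) - i - j) + 3)) = 2 ^ n.choose 2 := by
  have row_eq : ∀ i ∈ Icc 1 n, ∏ j ∈ Icc 1 (n + 1 - i),
      (((n : ℚ) - i + j) / (2 * ((n : ℚ) - i - j) + 3)) = 2 ^ (n - i) := by
    intro i hi
    have hin := (mem_Icc.1 hi).2
    rw [← prod_staircase_row (n - i), show n + 1 - i = n - i + 1 by omega, Nat.cast_sub hin]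
  rw [prod_congr rfl row_eq, prod_Icc_one_sub_eq_prod_range (2 ^ ·), prod_pow_eq_pow_sum,
    sum_range_id, Nat.choose_two_right]

/-- For every `n ≥ 2`, the product over all staircase cells `(i, j)` with
`1 ≤ i ≤ n` and `1 ≤ j ≤ n + 1 - i` of the ratio of the hook content
`c_n(i,j) = n - i + j` to the hook length `h_n(i,j) = 2(n - i - j) + 3`
equals `2^(n choose 2)`. -/
theorem hook_content_formula_staircase (n : ℕ) (hn : 2 ≤ n) :
    ∏ i ∈ Finset.Icc 1 n, ∏ j ∈ Finset.Icc 1 (n + 1 - i),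
      (((n : ℚ) - i + j) / (2 * ((n : ℚ) - i - j) + 3)) = 2 ^ n.choose 2 :=
  hook_content_formula_staircase_general n
end

section
/- In any single-peaked narcissistic preference profile on a set V of n ≥ 2 voters (who are also the alternatives), there exist two voters i and j whose preference orders are exact reverses of each other, i.e., the set of pairs of alternatives ordered differently by ≻_i and ≻_j has cardinality (n choose 2). -/
/-!
Take the two voters at the ends of the single-peaked axis. The leftmost voter's peak is the
leftmost alternative, so single-peakedness forces her to rank alternatives from left to right;
symmetrically the rightmost voter ranks them from right to left. These two orders are reverses
of each other, so the two voters disagree on every one of the `n choose 2` pairs.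
-/

/-- Voter with ranking equiv `p` (alternative ↦ position) prefers `a` to `b`. -/
def prefers {n : ℕ} (p : Fin n ≃ Fin n) (a b : Fin n) : Prop :=
  p a < p b

/-- A profile is narcissistic if every voter ranks herself first. -/
def Narcissistic {n : ℕ} (P : Fin n → Fin n ≃ Fin n) : Prop :=
  ∀ i a, a ≠ i → prefers (P i) i a

/-- Single-peakedness of a profile with respect to a strict order `lt` on alternatives:
for every voter `i` with peak `c` (the alternative ranked first by `i`),
if `lt a b ∧ lt b c` or `lt c b ∧ lt b a` then voter `i` prefers `b` to `a`. -/
def SinglePeakedWrt {m n : ℕ} (P : Fin m → Fin n ≃ Fin n)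
    (lt : Fin n → Fin n → Prop) : Prop :=
  ∀ (i : Fin m) (c a b : Fin n), (∀ x, x ≠ c → prefers (P i) c x) →
    ((lt a b ∧ lt b c) ∨ (lt c b ∧ lt b a)) → prefers (P i) b a

/-- Single-crossingness of a profile with respect to a strict order `lt` on voters. -/
def SingleCrossingWrt {m n : ℕ} (P : Fin m → Fin n ≃ Fin n)
    (lt : Fin m → Fin m → Prop) : Prop :=
  ∀ (a b : Fin n) (i j k : Fin m), lt i j → lt j k →
    prefers (P i) a b → prefers (P k) a b → prefers (P j) a b

/-- `T` is a semi-standard Young tableau of (staircase) order `n`: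
the valid cells are the `(i, j)` (0-indexed) with `i + j < n` (so row `i` has `n - i`
entries, entries being elements of `Fin n`, i.e. of `{1,…,n}`), entries weakly increase
along rows and strictly increase down columns; entries outside the staircase are `0`. -/
def IsSSYT (n : ℕ) (T : Fin n → Fin n → Fin n) : Prop :=
  (∀ i j j' : Fin n, j ≤ j' → (i : ℕ) + (j' : ℕ) < n → T i j ≤ T i j') ∧
  (∀ i i' j : Fin n, i < i' → (i' : ℕ) + (j : ℕ) < n → T i j < T i' j) ∧
  (∀ i j : Fin n, n ≤ (i : ℕ) + (j : ℕ) → (T i j : ℕ) = 0)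

open Function

lemma card_prefers_pairs {n : ℕ} (p : Fin n ≃ Fin n) :
    Nat.card {x : Fin n × Fin n // prefers p x.1 x.2} = n.choose 2 := by
  have e : {x : Fin n × Fin n // prefers p x.1 x.2} ≃ {x : Fin n × Fin n // x.1 < x.2} :=
    Equiv.subtypeEquiv (p.prodCongr p) fun _ => Iff.rfl
  rw [Nat.card_congr e, Nat.card_eq_fintype_card, Fintype.card_subtype,
    Fintype.card_product_filter_lt, Fintype.card_fin]

lemma prefers_iff_lt_of_lt_imp {n : ℕ} {α : Type*} [LinearOrder α] {p : Fin n ≃ Fin n}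
    {f : Fin n → α} (hf : Injective f) (h : ∀ a b, f a < f b → prefers p a b) (a b : Fin n) :
    prefers p a b ↔ f a < f b := by
  refine ⟨fun hab => ?_, h a b⟩
  rcases lt_trichotomy (f a) (f b) with hlt | heq | hgt
  · exact hlt
  · exact absurd hab (hf heq ▸ lt_irrefl _)
  · exact absurd hab (lt_asymm (h b a hgt))

namespace SinglePeakedWrt

variable {m n : ℕ} {P : Fin m → Fin n ≃ Fin n}

lemma swap {lt : Fin n → Fin n → Prop} (hsp : SinglePeakedWrt P lt) :
    SinglePeakedWrt P fun a b => lt b a :=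
  fun i c a b hpeak hbetween => hsp i c a b hpeak (hbetween.symm.imp And.symm And.symm)

variable {α : Type*} [LinearOrder α] {f : Fin n → α}

lemma prefers_iff_lt_of_peak_min (hsp : SinglePeakedWrt P fun a b => f a < f b)
    (hf : Injective f) {i : Fin m} {c : Fin n} (hpeak : ∀ x, x ≠ c → prefers (P i) c x)
    (hmin : ∀ x, f c ≤ f x) (a b : Fin n) :
    prefers (P i) a b ↔ f a < f b := by
  refine prefers_iff_lt_of_lt_imp hf (fun a b hab => ?_) a b
  by_cases ha : a = c
  · subst ha
    exact hpeak b fun hb => lt_irrefl _ (hb ▸ hab)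
  · exact hsp i c b a hpeak (Or.inr ⟨(hmin a).lt_of_ne (hf.ne (Ne.symm ha)), hab⟩)

lemma prefers_iff_lt_of_peak_max (hsp : SinglePeakedWrt P fun a b => f a < f b)
    (hf : Injective f) {i : Fin m} {c : Fin n} (hpeak : ∀ x, x ≠ c → prefers (P i) c x)
    (hmax : ∀ x, f x ≤ f c) (a b : Fin n) :
    prefers (P i) a b ↔ f b < f a :=
  prefers_iff_lt_of_peak_min (f := OrderDual.toDual ∘ f) hsp.swap
    (OrderDual.toDual.injective.comp hf) hpeak hmax a b

end SinglePeakedWrt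

/-- In any single-peaked narcissistic profile on `n ≥ 2` voters (who are also the
alternatives), there are two voters `i ≠ j` whose preference orders are exact reverses
of each other: the number of pairs of alternatives on which they disagree is
`n choose 2` (each unordered pair `{a, b}` ordered differently by `≻ᵢ` and `≻ⱼ` is
counted once, as the ordered pair `(a, b)` with `a ≻ᵢ b` and `b ≻ⱼ a`). -/
theorem spn_reverse_pair_exists (n : ℕ) (hn : 2 ≤ n)
    (P : Fin n → Fin n ≃ Fin n)
    (hnar : Narcissistic P)
    (hsp : ∃ σ : Fin n ≃ Fin n, SinglePeakedWrt P (fun a b => σ a < σ b)) :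
    ∃ i j : Fin n, i ≠ j ∧
      Nat.card {p : Fin n × Fin n //
        prefers (P i) p.1 p.2 ∧ prefers (P j) p.2 p.1} = n.choose 2 := by
  obtain ⟨m, rfl⟩ : ∃ m, n = m + 2 := ⟨n - 2, by omega⟩
  obtain ⟨σ, hsp⟩ := hsp
  set i := σ.symm 0
  set j := σ.symm (Fin.last _)
  have hi : ∀ a b, prefers (P i) a b ↔ σ a < σ b :=
    hsp.prefers_iff_lt_of_peak_min σ.injective (hnar i) (by simp [i])
  have hj : ∀ a b, prefers (P j) a b ↔ σ b < σ a :=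
    hsp.prefers_iff_lt_of_peak_max σ.injective (hnar j) (by simp [j, Fin.le_last])
  refine ⟨i, j, by simp [i, j, Fin.ext_iff], ?_⟩
  have hrev : ∀ x : Fin (m + 2) × Fin (m + 2),
      prefers (P i) x.1 x.2 ∧ prefers (P j) x.2 x.1 ↔ prefers (P i) x.1 x.2 := fun x => by
    rw [hi, hj, and_self]
  rw [Nat.card_congr (Equiv.subtypeEquivRight hrev), card_prefers_pairs]
end

section
/- The number of single-peaked narcissistic preference profiles on n ≥ 2 voters, up to renaming of voters (equivalently, profiles narcissistic and single-peaked with respect to the fixed order 1 ▷ 2 ▷ ... ▷ n in which voter 1 has order 1 ≻ 2 ≻ ... ≻ n and voter n has the reverse), equals the product over i from 2 to n-1 of binom(n-1, i-1). -/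
/-!
The profiles counted are exactly those in which each voter's ranking is single-peaked with peak
at the voter herself. A ranking single-peaked at `c` puts `c` first and then
interleaves the alternatives below `c`, in decreasing order, with those above `c`, in increasing
order; it is determined by the `c` positions among the last `n - 1` that the alternatives below
`c` occupy, so there are `C(n - 1, c)` of them. The factors for the two extreme voters are `1`.
-/

open Finset

section Shuffle

variable {α β : Type*} [LinearOrder α] [LinearOrder β] {s : Set α}

def IsShuffle (s : Set α) (q : α ≃ β) : Prop :=
  StrictAntiOn q s ∧ StrictMonoOn q sᶜ

theorem IsShuffle.eq_of_image_eq [Finite α] {q q' : α ≃ β} (hq : IsShuffle s q)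
    (hq' : IsShuffle s q') (h : q '' s = q' '' s) : q = q' := by
  have hs : (fun x : s => q x) = fun x : s => q' x :=
    ((Set.strictAntiOn_iff_strictAnti.1 hq.1).range_inj
      (Set.strictAntiOn_iff_strictAnti.1 hq'.1)).1 (by simpa only [Set.image_eq_range] using h)
  have hsc : (fun x : (sᶜ : Set α) => q x) = fun x : (sᶜ : Set α) => q' x := by
    refine ((Set.strictMonoOn_iff_strictMono.1 hq.2).range_inj
      (Set.strictMonoOn_iff_strictMono.1 hq'.2)).1 ?_
    have hc : q '' sᶜ = q' '' sᶜ := by rw [q.image_compl, q'.image_compl, h]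
    simpa only [Set.image_eq_range] using hc
  ext x
  by_cases hx : x ∈ s
  · exact congrFun hs ⟨x, hx⟩
  · exact congrFun hsc ⟨x, hx⟩

theorem exists_isShuffle_image_eq [Fintype α] [Fintype β] [DecidablePred (· ∈ s)]
    (hαβ : Fintype.card α = Fintype.card β) (T : Finset β) (hT : T.card = Fintype.card s) :
    ∃ q : α ≃ β, IsShuffle s q ∧ q '' s = T := by
  classical
  let e₁ : s ≃o (T : Set β)ᵒᵈ := (Fintype.orderIsoFinOfCardEq s rfl).symm.trans
    (Fintype.orderIsoFinOfCardEq _ (by simp [hT]))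
  let e₂ : (sᶜ : Set α) ≃o ((T : Set β)ᶜ : Set β) :=
    (Fintype.orderIsoFinOfCardEq _ rfl).symm.trans
      (Fintype.orderIsoFinOfCardEq _ (by simp only [Fintype.card_compl_set]; simp [hT, hαβ]))
  let q : α ≃ β := (Equiv.Set.sumCompl s).symm.trans
    ((Equiv.sumCongr (e₁.toEquiv.trans OrderDual.ofDual) e₂.toEquiv).trans
      (Equiv.Set.sumCompl (T : Set β)))
  have hq₁ : ∀ x (hx : x ∈ s), q x = OrderDual.ofDual (e₁ ⟨x, hx⟩) := by
    intro x hx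
    simp only [q, Equiv.trans_apply, Equiv.Set.sumCompl_symm_apply_of_mem hx]
    rfl
  have hq₂ : ∀ x (hx : x ∈ sᶜ), q x = e₂ ⟨x, hx⟩ := by
    intro x hx
    simp only [q, Equiv.trans_apply, Equiv.Set.sumCompl_symm_apply_of_notMem hx]
    rfl
  refine ⟨q, ⟨fun a ha b hb hab => ?_, fun a ha b hb hab => ?_⟩, ?_⟩
  · rw [hq₁ a ha, hq₁ b hb]
    exact e₁.strictMono (show (⟨a, ha⟩ : s) < ⟨b, hb⟩ from hab)
  · rw [hq₂ a ha, hq₂ b hb]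
    exact e₂.strictMono (show (⟨a, ha⟩ : (sᶜ : Set α)) < ⟨b, hb⟩ from hab)
  · ext y
    constructor
    · rintro ⟨x, hx, rfl⟩
      rw [hq₁ x hx]
      exact Subtype.prop _
    · intro hy
      refine ⟨e₁.symm (OrderDual.toDual ⟨y, hy⟩), Subtype.prop _, ?_⟩
      rw [hq₁ _ (Subtype.prop _)]
      simp

end Shuffle

section SinglePeaked

variable {α β : Type*} [LinearOrder α] [LinearOrder β]

def IsSinglePeakedAt (c : α) (q : α ≃ β) : Prop :=
  StrictAntiOn q (Set.Iic c) ∧ StrictMonoOn q (Set.Ici c)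

theorem IsSinglePeakedAt.apply_peak_lt {c : α} {q : α ≃ β} (h : IsSinglePeakedAt c q) {x : α}
    (hx : x ≠ c) : q c < q x := by
  rcases hx.lt_or_gt with hxc | hcx
  · exact h.1 hxc.le le_rfl hxc
  · exact h.2 le_rfl hcx.le hcx

theorem isSinglePeakedAt_iff_isShuffle [OrderBot β] {c : α} {q : α ≃ β} :
    IsSinglePeakedAt c q ↔ IsShuffle (Set.Iio c) q ∧ ⊥ ∉ q '' Set.Iio c := by
  have hcompl : (Set.Iio c)ᶜ = Set.Ici c := Set.compl_Iio
  constructor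
  · intro h
    refine ⟨⟨h.1.mono Set.Iio_subset_Iic_self, hcompl ▸ h.2⟩, ?_⟩
    rintro ⟨x, hxc, hx⟩
    exact not_lt_bot (hx ▸ h.apply_peak_lt (ne_of_lt hxc))
  · rintro ⟨⟨hanti, hmono⟩, hbot⟩
    rw [hcompl] at hmono
    have hc : q c = ⊥ := by
      obtain ⟨x, hx⟩ := q.surjective ⊥
      have hcx : c ≤ x := not_lt.1 fun hxc => hbot ⟨x, hxc, hx⟩
      obtain rfl | hcx := hcx.eq_or_lt
      · exact hx
      · exact absurd (hx ▸ hmono le_rfl hcx.le hcx) not_lt_bot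
    refine ⟨fun a ha b hb hab => ?_, hmono⟩
    obtain rfl | hbc := (Set.mem_Iic.1 hb).eq_or_lt
    · rw [hc, bot_lt_iff_ne_bot, ← hc]
      exact q.injective.ne hab.ne
    · exact hanti (hab.trans hbc) hbc hab

theorem card_isSinglePeakedAt {n : ℕ} (c : Fin n) :
    Nat.card {q : Fin n ≃ Fin n // IsSinglePeakedAt c q} = (n - 1).choose c := by
  obtain ⟨m, rfl⟩ : ∃ m, n = m + 1 := ⟨n - 1, (Nat.sub_add_cancel c.pos).symm⟩
  let S := (univ.erase (⊥ : Fin (m + 1))).powersetCard c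
  let positionsBelow (q : {q : Fin (m + 1) ≃ Fin (m + 1) // IsSinglePeakedAt c q}) : S :=
    ⟨(Iio c).map q.1.toEmbedding, by
      have hbot := (isSinglePeakedAt_iff_isShuffle.1 q.2).2
      refine mem_powersetCard.2 ⟨fun y hy => mem_erase.2 ⟨?_, mem_univ y⟩, by simp⟩
      rintro rfl
      exact hbot (by simpa using hy)⟩
  have hbij : Function.Bijective positionsBelow := by
    refine ⟨fun q q' h => Subtype.ext ?_, fun T => ?_⟩
    · refine (isSinglePeakedAt_iff_isShuffle.1 q.2).1.eq_of_image_eq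
        (isSinglePeakedAt_iff_isShuffle.1 q'.2).1 ?_
      simpa [positionsBelow, ← Finset.coe_inj] using congrArg Subtype.val h
    · obtain ⟨hTsub, hTcard⟩ := mem_powersetCard.1 T.2
      obtain ⟨q, hq, hqT⟩ := exists_isShuffle_image_eq (s := Set.Iio c) rfl T.1
        (by simp [hTcard, filter_gt_eq_Iio])
      have hbot : ⊥ ∉ q '' Set.Iio c := by
        rw [hqT]
        exact fun h => (mem_erase.1 (hTsub h)).1 rfl
      refine ⟨⟨q, isSinglePeakedAt_iff_isShuffle.2 ⟨hq, hbot⟩⟩, Subtype.ext ?_⟩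
      simpa [positionsBelow, ← Finset.coe_inj] using hqT
  rw [Nat.card_congr (Equiv.ofBijective _ hbij), Nat.card_eq_fintype_card, Fintype.card_coe,
    card_powersetCard, card_erase_of_mem (mem_univ _), card_univ, Fintype.card_fin,
    Nat.add_sub_cancel]

end SinglePeaked

section Profiles

variable {n : ℕ}

theorem narcissistic_and_singlePeakedWrt_iff (P : Fin n → Fin n ≃ Fin n) :
    Narcissistic P ∧ SinglePeakedWrt P (· < ·) ↔ ∀ v, IsSinglePeakedAt v (P v) := by
  constructor
  · rintro ⟨hN, hSP⟩ v
    have hpeak : ∀ x, x ≠ v → prefers (P v) v x := hN v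
    refine ⟨fun a _ b hb hab => ?_, fun a ha b _ hab => ?_⟩
    · obtain rfl | hbv := (Set.mem_Iic.1 hb).eq_or_lt
      · exact hN _ _ hab.ne
      · exact hSP v v a b hpeak (Or.inl ⟨hab, hbv⟩)
    · obtain rfl | hva := (Set.mem_Ici.1 ha).eq_or_lt
      · exact hN _ _ hab.ne'
      · exact hSP v v b a hpeak (Or.inr ⟨hva, hab⟩)
  · intro hG
    refine ⟨fun i a => (hG i).apply_peak_lt, fun i c a b hpeak hab => ?_⟩
    have hc : c = i := by
      by_contra hci
      exact lt_asymm ((hG i).apply_peak_lt hci) (hpeak i (Ne.symm hci))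
    subst hc
    rcases hab with ⟨hab, hbc⟩ | ⟨hcb, hba⟩
    · exact (hG c).1 (hab.trans hbc).le hbc.le hab
    · exact (hG c).2 hcb.le (hcb.trans hba).le hba

theorem IsSinglePeakedAt.prefers_of_lt_of_val_eq_zero {v a b : Fin n} {q : Fin n ≃ Fin n}
    (h : IsSinglePeakedAt v q) (hv : (v : ℕ) = 0) (hab : a < b) : prefers q a b :=
  h.2 (Fin.le_def.2 (by omega)) (Fin.le_def.2 (by omega)) hab

theorem IsSinglePeakedAt.prefers_of_lt_of_val_eq_last {v a b : Fin n} {q : Fin n ≃ Fin n}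
    (h : IsSinglePeakedAt v q) (hv : (v : ℕ) = n - 1) (hab : a < b) : prefers q b a :=
  h.1 (Fin.le_def.2 (by omega)) (Fin.le_def.2 (by omega)) hab

end Profiles

theorem prod_choose_fin_eq_prod_Icc (n : ℕ) :
    ∏ v : Fin n, (n - 1).choose v = ∏ i ∈ Icc 2 (n - 1), (n - 1).choose (i - 1) := by
  have hshift : ∏ i ∈ Icc 2 (n - 1), (n - 1).choose (i - 1) =
      ∏ k ∈ Ioo 0 (n - 1), (n - 1).choose k :=
    prod_nbij' (· - 1) (· + 1) (fun i hi => by simp at hi ⊢; omega)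
      (fun k hk => by simp at hk ⊢; omega) (fun i hi => by simp at hi ⊢; omega)
      (fun k _ => by simp) (fun _ _ => rfl)
  rw [Fin.prod_univ_eq_prod_range (fun k => (n - 1).choose k), hshift]
  refine (prod_subset (fun k hk => ?_) fun k hk hk' => ?_).symm
  · simp only [mem_Ioo, mem_range] at hk ⊢
    omega
  · simp only [mem_Ioo, mem_range, not_and_or, not_lt] at hk hk'
    obtain rfl | rfl : k = 0 ∨ k = n - 1 := by omega
    · exact Nat.choose_zero_right _
    · exact Nat.choose_self _

theorem spn_count_general (n : ℕ) :
    Nat.card {P : Fin n → Fin n ≃ Fin n //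
      Narcissistic P ∧
      SinglePeakedWrt P (· < ·) ∧
      (∀ v a b : Fin n, (v : ℕ) = 0 → a < b → prefers (P v) a b) ∧
      (∀ v a b : Fin n, (v : ℕ) = n - 1 → a < b → prefers (P v) b a)} =
      ∏ i ∈ Finset.Icc 2 (n - 1), (n - 1).choose (i - 1) := by
  have hprofile : ∀ P : Fin n → Fin n ≃ Fin n,
      (Narcissistic P ∧ SinglePeakedWrt P (· < ·) ∧
        (∀ v a b : Fin n, (v : ℕ) = 0 → a < b → prefers (P v) a b) ∧
        (∀ v a b : Fin n, (v : ℕ) = n - 1 → a < b → prefers (P v) b a)) ↔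
      ∀ v, IsSinglePeakedAt v (P v) := fun P => by
    rw [← and_assoc, narcissistic_and_singlePeakedWrt_iff, and_iff_left_iff_imp]
    exact fun h => ⟨fun v _ _ hv => (h v).prefers_of_lt_of_val_eq_zero hv,
      fun v _ _ hv => (h v).prefers_of_lt_of_val_eq_last hv⟩
  calc _ = Nat.card {P : Fin n → Fin n ≃ Fin n // ∀ v, IsSinglePeakedAt v (P v)} :=
        Nat.card_congr (Equiv.subtypeEquivRight hprofile)
    _ = ∏ v : Fin n, Nat.card {q : Fin n ≃ Fin n // IsSinglePeakedAt v q} :=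
        (Nat.card_congr (Equiv.subtypePiEquivPi (p := fun v q => IsSinglePeakedAt v q))).trans
          Nat.card_pi
    _ = _ := by simp only [card_isSinglePeakedAt, prod_choose_fin_eq_prod_Icc]

/-- The number of single-peaked narcissistic profiles on `n ≥ 2` voters in normalized
form (narcissistic, single-peaked with respect to the natural order `0 < 1 < ⋯ < n-1`,
the first voter's order being `0 ≻ 1 ≻ ⋯ ≻ n-1` and the last voter's order the reverse)
equals `∏_{i=2}^{n-1} C(n-1, i-1)`. -/
theorem spn_count (n : ℕ) (hn : 2 ≤ n) :
    Nat.card {P : Fin n → Fin n ≃ Fin n //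
      Narcissistic P ∧
      SinglePeakedWrt P (· < ·) ∧
      (∀ v a b : Fin n, (v : ℕ) = 0 → a < b → prefers (P v) a b) ∧
      (∀ v a b : Fin n, (v : ℕ) = n - 1 → a < b → prefers (P v) b a)} =
      ∏ i ∈ Finset.Icc 2 (n - 1), (n - 1).choose (i - 1) :=
  spn_count_general n
end

section
/- Every single-crossing narcissistic preference profile is single-peaked. -/
/-! The single-crossing order of the voters, read as an order on the alternatives, is a
single-peaked axis: if `b` lies between `a` and `c` and voter `c` preferred `a` to `b`, then
single crossing between voters `a` and `c` would make voter `b` prefer `a` to `b`, against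
narcissism. -/

theorem prefers_of_not_prefers {n : ℕ} {p : Fin n ≃ Fin n} {a b : Fin n} (hab : a ≠ b)
    (h : ¬ prefers p b a) : prefers p a b :=
  lt_of_le_of_ne (not_lt.1 h) (p.injective.ne hab)

theorem Narcissistic.eq_of_forall_prefers {n : ℕ} {P : Fin n → Fin n ≃ Fin n}
    (hnar : Narcissistic P) {i c : Fin n} (hpeak : ∀ x, x ≠ c → prefers (P i) c x) : c = i := by
  by_contra hci
  exact lt_asymm (hnar i c hci) (hpeak i (Ne.symm hci))

theorem SingleCrossingWrt.flip {m n : ℕ} {P : Fin m → Fin n ≃ Fin n} {lt : Fin m → Fin m → Prop}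
    (hsc : SingleCrossingWrt P lt) : SingleCrossingWrt P (fun i j => lt j i) :=
  fun a b i j k hij hjk hi hk => hsc a b k j i hjk hij hk hi

theorem SingleCrossingWrt.prefers_of_lt_of_lt {n : ℕ} {P : Fin n → Fin n ≃ Fin n}
    {lt : Fin n → Fin n → Prop} (hsc : SingleCrossingWrt P lt) (hnar : Narcissistic P)
    {a b c : Fin n} (hab : a ≠ b) (hlt_ab : lt a b) (hlt_bc : lt b c) : prefers (P c) b a := by
  by_contra hcba
  have hcab : prefers (P c) a b := prefers_of_not_prefers hab hcba
  exact lt_asymm (hnar b a hab) (hsc a b a b c hlt_ab hlt_bc (hnar a b hab.symm) hcab)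

/-- Every single-crossing narcissistic preference profile is single-peaked. -/
theorem scn_implies_sp (n : ℕ) (P : Fin n → Fin n ≃ Fin n)
    (hnar : Narcissistic P)
    (hsc : ∃ σ : Fin n ≃ Fin n, SingleCrossingWrt P (fun i j => σ i < σ j)) :
    ∃ τ : Fin n ≃ Fin n, SinglePeakedWrt P (fun a b => τ a < τ b) := by
  obtain ⟨σ, hsc⟩ := hsc
  refine ⟨σ, fun i c a b hpeak hbetween => ?_⟩
  obtain rfl := hnar.eq_of_forall_prefers hpeak
  have hab : a ≠ b := by
    rintro rfl
    rcases hbetween with ⟨h, -⟩ | ⟨-, h⟩ <;> exact lt_irrefl _ h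
  rcases hbetween with ⟨hab_lt, hbc_lt⟩ | ⟨hcb_lt, hba_lt⟩
  · exact hsc.prefers_of_lt_of_lt hnar hab hab_lt hbc_lt
  · exact hsc.flip.prefers_of_lt_of_lt hnar hab hba_lt hcb_lt
end

section
/- If a preference profile contains a worst-subprofile, i.e., three alternatives a, b, c and three voters i, j, k such that voter i prefers both b and c to a, voter j prefers both a and c to b, and voter k prefers both a and b to c, then the profile is not single-peaked. -/
/-! Of `a`, `b`, `c`, the one lying in the middle of the axis is ranked below the other two by
one of the voters `i`, `j`, `k`. A single-peaked voter never does that: whichever side of the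
middle alternative her peak lies on (or if it is the peak), it beats the outer alternative on the
other side. -/

/-- `y` lies strictly between `x` and `z` with respect to `r`. -/
def StrictlyBetween {α : Type*} (r : α → α → Prop) (x y z : α) : Prop :=
  (r x y ∧ r y z) ∨ (r z y ∧ r y x)

theorem StrictlyBetween.of_ne {α : Type*} [LinearOrder α] {x y z : α}
    (hxy : x ≠ y) (hxz : x ≠ z) (hyz : y ≠ z) :
    StrictlyBetween LT.lt y x z ∨ StrictlyBetween LT.lt x y z ∨ StrictlyBetween LT.lt x z y := by
  unfold StrictlyBetween
  rcases hxy.lt_or_gt with h₁ | h₁ <;> rcases hyz.lt_or_gt with h₂ | h₂ <;>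
    rcases hxz.lt_or_gt with h₃ | h₃ <;> simp_all

theorem ne_of_prefers {n : ℕ} {p : Fin n ≃ Fin n} {x y : Fin n} (h : prefers p x y) : x ≠ y :=
  fun hxy => lt_irrefl (p y) (hxy ▸ h)

theorem exists_forall_prefers {n : ℕ} [NeZero n] (p : Fin n ≃ Fin n) :
    ∃ c, ∀ x, x ≠ c → prefers p c x := by
  refine ⟨p.symm 0, fun x hx => ?_⟩
  rw [prefers, p.apply_symm_apply, Fin.pos_iff_ne_zero]
  exact fun h => hx (p.eq_symm_apply.mpr h)

theorem SinglePeakedWrt.not_prefers_of_lt_of_lt {m n : ℕ} {P : Fin m → Fin n ≃ Fin n}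
    {lt : Fin n → Fin n → Prop} [Std.Trichotomous lt] (hsp : SinglePeakedWrt P lt) (v : Fin m)
    {x y z : Fin n} (hxy : lt x y) (hyz : lt y z) (hx : prefers (P v) x y) :
    ¬ prefers (P v) z y := by
  have : NeZero n := ⟨y.pos.ne'⟩
  obtain ⟨c, hc⟩ := exists_forall_prefers (P v)
  rcases trichotomous (r := lt) c y with hcy | rfl | hyc
  · exact lt_asymm (hsp v c z y hc (.inr ⟨hcy, hyz⟩))
  · exact fun _ => lt_asymm hx (hc x (ne_of_prefers hx))
  · exact fun _ => lt_asymm hx (hsp v c x y hc (.inl ⟨hxy, hyc⟩))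

theorem SinglePeakedWrt.not_prefers_both_over_between {m n : ℕ} {P : Fin m → Fin n ≃ Fin n}
    {lt : Fin n → Fin n → Prop} [Std.Trichotomous lt] (hsp : SinglePeakedWrt P lt) (v : Fin m)
    {x y z : Fin n} (hxyz : StrictlyBetween lt x y z) :
    ¬ (prefers (P v) x y ∧ prefers (P v) z y) := by
  rintro ⟨hx, hz⟩
  rcases hxyz with ⟨hxy, hyz⟩ | ⟨hzy, hyx⟩
  · exact hsp.not_prefers_of_lt_of_lt v hxy hyz hx hz
  · exact hsp.not_prefers_of_lt_of_lt v hzy hyx hz hx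

theorem worst_subprofile_not_sp_general (m n : ℕ) (P : Fin m → Fin n ≃ Fin n)
    (a b c : Fin n) (i j k : Fin m)
    (hi : prefers (P i) b a ∧ prefers (P i) c a)
    (hj : prefers (P j) a b ∧ prefers (P j) c b)
    (hk : prefers (P k) a c ∧ prefers (P k) b c) :
    ¬ ∃ σ : Fin n ≃ Fin n, SinglePeakedWrt P (fun x y => σ x < σ y) := by
  rintro ⟨σ, hsp⟩
  have : Std.Trichotomous (fun x y => σ x < σ y) :=
    ⟨fun x y h₁ h₂ => σ.injective (le_antisymm (not_lt.1 h₂) (not_lt.1 h₁))⟩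
  have hab : σ a ≠ σ b := σ.injective.ne (ne_of_prefers hj.1)
  have hac : σ a ≠ σ c := σ.injective.ne (ne_of_prefers hk.1)
  have hbc : σ b ≠ σ c := σ.injective.ne (ne_of_prefers hk.2)
  rcases StrictlyBetween.of_ne hab hac hbc with hbac | habc | hacb
  · exact hsp.not_prefers_both_over_between i hbac hi
  · exact hsp.not_prefers_both_over_between j habc hj
  · exact hsp.not_prefers_both_over_between k hacb hk

/-- A profile containing a worst-subprofile (three distinct alternatives `a, b, c` and
voters `i, j, k` such that `i` ranks `a` below `b` and `c`, `j` ranks `b` below `a` and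
`c`, and `k` ranks `c` below `a` and `b`) is not single-peaked. -/
theorem worst_subprofile_not_sp (m n : ℕ) (P : Fin m → Fin n ≃ Fin n)
    (a b c : Fin n) (i j k : Fin m)
    (hab : a ≠ b) (hac : a ≠ c) (hbc : b ≠ c)
    (hi : prefers (P i) b a ∧ prefers (P i) c a)
    (hj : prefers (P j) a b ∧ prefers (P j) c b)
    (hk : prefers (P k) a c ∧ prefers (P k) b c) :
    ¬ ∃ σ : Fin n ≃ Fin n, SinglePeakedWrt P (fun x y => σ x < σ y) :=
  worst_subprofile_not_sp_general m n P a b c i j k hi hj hk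
end

section
/- If a preference profile contains an α-subprofile, i.e., four alternatives a, b, c, d and two voters i, j such that voter i's order satisfies a ≻_i c, b ≻_i c, c ≻_i d, and voter j's order satisfies b ≻_j c, d ≻_j c, c ≻_j a, then the profile is not single-peaked. -/
/-!
Alternative `c` is beaten by `a` and `b` for voter `i` and by `b` and `d` for voter `j`. An alternative ranked below two others cannot lie strictly between them on a single-peaked axis,
so `a`, `b`, `d` all lie on the same side of `c`; after reversing the axis if necessary, to the right.
A voter who prefers `c` to some `y` right of `c` has her peak left of `y`, so every alternative she
prefers to `y` lies left of `y`. Voter `i` (`a ≻ c ≻ d`) thus puts `a` left of `d`, while voter `j`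
(`d ≻ c ≻ a`) puts `d` left of `a`.
-/

open Function OrderDual

section SinglePeaked

variable {n : ℕ} {L : Type*} [LinearOrder L]

theorem prefers.ne {p : Fin n ≃ Fin n} {x y : Fin n} (h : prefers p x y) : x ≠ y :=
  ne_of_apply_ne p (ne_of_lt h)

theorem prefers.asymm {p : Fin n ≃ Fin n} {x y : Fin n} (h : prefers p x y) : ¬ prefers p y x :=
  lt_asymm h

theorem prefers.trans {p : Fin n ≃ Fin n} {x y z : Fin n} (hxy : prefers p x y)
    (hyz : prefers p y z) : prefers p x z :=
  lt_trans hxy hyz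

theorem exists_peak [NeZero n] (p : Fin n ≃ Fin n) : ∃ t, ∀ x, x ≠ t → prefers p t x :=
  ⟨p.symm 0, fun x hx => by
    rw [prefers, Equiv.apply_symm_apply, Fin.pos_iff_ne_zero']
    exact fun h => hx (p.eq_symm_apply.2 h)⟩

def SinglePeakedVoter (pos : Fin n → L) (p : Fin n ≃ Fin n) (t : Fin n) : Prop :=
  (∀ x, x ≠ t → prefers p t x) ∧
    ∀ x y, (pos x < pos y ∧ pos y < pos t) ∨ (pos t < pos y ∧ pos y < pos x) → prefers p y x

theorem SinglePeakedWrt.exists_singlePeakedVoter [NeZero n] {m : ℕ}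
    {P : Fin m → Fin n ≃ Fin n} {pos : Fin n → L}
    (hsp : SinglePeakedWrt P (fun x y => pos x < pos y)) (i : Fin m) :
    ∃ t, SinglePeakedVoter pos (P i) t :=
  let ⟨t, ht⟩ := exists_peak (P i)
  ⟨t, ht, fun x y => hsp i t x y ht⟩

namespace SinglePeakedVoter

variable {pos : Fin n → L} {p : Fin n ≃ Fin n} {t x y z : Fin n}

theorem dual (h : SinglePeakedVoter pos p t) : SinglePeakedVoter (toDual ∘ pos) p t :=
  ⟨h.1, fun x y hxy => h.2 x y (hxy.symm.imp And.symm And.symm)⟩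

theorem ne_peak (h : SinglePeakedVoter pos p t) (hxy : prefers p x y) : y ≠ t := by
  rintro rfl
  exact (h.1 x hxy.ne).asymm hxy

theorem lt_of_peak_lt (h : SinglePeakedVoter pos p t) (hpos : Injective pos)
    (hty : pos t < pos y) (hxy : prefers p x y) : pos x < pos y :=
  (lt_or_gt_of_ne (hpos.ne hxy.ne)).resolve_right fun hyx =>
    hxy.asymm (h.2 x y (Or.inr ⟨hty, hyx⟩))

theorem lt_peak_of_prefers (h : SinglePeakedVoter pos p t) (hpos : Injective pos)
    (hxz : prefers p x z) (hzx : pos z < pos x) : pos z < pos t := by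
  by_contra! htz
  have hzt : pos t < pos z := htz.lt_of_ne (hpos.ne (h.ne_peak hxz).symm)
  exact lt_asymm hzx (h.lt_of_peak_lt hpos hzt hxz)

theorem peak_lt_of_prefers (h : SinglePeakedVoter pos p t) (hpos : Injective pos)
    (hzy : prefers p z y) (hzy' : pos z < pos y) : pos t < pos y := by
  by_contra! hyt
  replace hyt : pos y < pos t := hyt.lt_of_ne (hpos.ne (h.ne_peak hzy))
  exact hzy.asymm (h.2 z y (Or.inl ⟨hzy', hyt⟩))

theorem lt_of_lt_of_prefers (h : SinglePeakedVoter pos p t) (hpos : Injective pos)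
    (hxz : prefers p x z) (hyz : prefers p y z) (hzx : pos z < pos x) : pos z < pos y :=
  (lt_or_gt_of_ne (hpos.ne hyz.ne.symm)).resolve_right fun hyz' =>
    hyz.asymm (h.2 y z (Or.inl ⟨hyz', h.lt_peak_of_prefers hpos hxz hzx⟩))

theorem lt_of_prefers_of_prefers (h : SinglePeakedVoter pos p t) (hpos : Injective pos)
    (hxz : prefers p x z) (hzy : prefers p z y) (hzy' : pos z < pos y) : pos x < pos y :=
  h.lt_of_peak_lt hpos (h.peak_lt_of_prefers hpos hzy hzy') (hxz.trans hzy)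

end SinglePeakedVoter

theorem not_alpha_subprofile_of_lt {pos : Fin n → L} (hpos : Injective pos)
    {p q : Fin n ≃ Fin n} {s t a b c d : Fin n}
    (hp : SinglePeakedVoter pos p s) (hq : SinglePeakedVoter pos q t) (hcb : pos c < pos b)
    (hpref : prefers p a c ∧ prefers p b c ∧ prefers p c d)
    (hqref : prefers q b c ∧ prefers q d c ∧ prefers q c a) : False := by
  obtain ⟨hpac, hpbc, hpcd⟩ := hpref
  obtain ⟨hqbc, hqdc, hqca⟩ := hqref
  have hca : pos c < pos a := hp.lt_of_lt_of_prefers hpos hpbc hpac hcb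
  have hcd : pos c < pos d := hq.lt_of_lt_of_prefers hpos hqbc hqdc hcb
  exact lt_asymm (hp.lt_of_prefers_of_prefers hpos hpac hpcd hcd)
    (hq.lt_of_prefers_of_prefers hpos hqdc hqca hca)

end SinglePeaked

theorem alpha_subprofile_not_sp_general (m n : ℕ) (P : Fin m → Fin n ≃ Fin n)
    (a b c d : Fin n) (i j : Fin m)
    (hi : prefers (P i) a c ∧ prefers (P i) b c ∧ prefers (P i) c d)
    (hj : prefers (P j) b c ∧ prefers (P j) d c ∧ prefers (P j) c a) :
    ¬ ∃ σ : Fin n ≃ Fin n, SinglePeakedWrt P (fun x y => σ x < σ y) := by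
  rintro ⟨σ, hsp⟩
  have : NeZero n := NeZero.of_pos a.pos
  obtain ⟨s, hs⟩ := hsp.exists_singlePeakedVoter i
  obtain ⟨t, ht⟩ := hsp.exists_singlePeakedVoter j
  rcases lt_or_gt_of_ne (σ.injective.ne hi.2.1.ne.symm) with hcb | hbc
  · exact not_alpha_subprofile_of_lt σ.injective hs ht hcb hi hj
  · exact not_alpha_subprofile_of_lt (toDual.injective.comp σ.injective) hs.dual ht.dual hbc hi hj

/-- A profile containing an `α`-subprofile (four distinct alternatives `a, b, c, d` and
two voters `i, j` with `a ≻ᵢ c`, `b ≻ᵢ c`, `c ≻ᵢ d` and `b ≻ⱼ c`, `d ≻ⱼ c`, `c ≻ⱼ a`)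
is not single-peaked. -/
theorem alpha_subprofile_not_sp (m n : ℕ) (P : Fin m → Fin n ≃ Fin n)
    (a b c d : Fin n) (i j : Fin m)
    (hab : a ≠ b) (hac : a ≠ c) (had : a ≠ d)
    (hbc : b ≠ c) (hbd : b ≠ d) (hcd : c ≠ d)
    (hi : prefers (P i) a c ∧ prefers (P i) b c ∧ prefers (P i) c d)
    (hj : prefers (P j) b c ∧ prefers (P j) d c ∧ prefers (P j) c a) :
    ¬ ∃ σ : Fin n ≃ Fin n, SinglePeakedWrt P (fun x y => σ x < σ y) :=
  alpha_subprofile_not_sp_general m n P a b c d i j hi hj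
end

section
/- If a preference profile contains a γ-subprofile, i.e., three pairs of alternatives {a,b}, {c,d}, {e,f} and three voters i, j, k with: a ≻_i b, c ≻_i d, e ≻_i f; b ≻_j a, d ≻_j c, e ≻_j f; a ≻_k b, d ≻_k c, f ≻_k e, then the profile is not single-crossing. -/
/-
Of three voters placed on a line, one lies between the other two, and single-crossing forces
that voter to agree with the outer two on every pair on which they agree. In a `γ`-subprofile
each voter is contradicted on some pair by the other two: `i` on `{c,d}`, `j` on `{a,b}` and
`k` on `{e,f}`. So none of them can be the middle one.
-/

section Profile

variable {m n : ℕ} (P : Fin m → Fin n ≃ Fin n)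

/-- Voter `j` ranks some pair against the common ranking of voters `i` and `k`. -/
def Dissents (j i k : Fin m) : Prop :=
  ∃ a b, prefers (P i) a b ∧ prefers (P k) a b ∧ prefers (P j) b a

variable {P}

lemma prefers_asymm {p : Fin n ≃ Fin n} {a b : Fin n} (h : prefers p a b) : ¬ prefers p b a :=
  lt_asymm h

lemma Dissents.ne_left {i j k : Fin m} (h : Dissents P j i k) : j ≠ i := by
  rintro rfl
  obtain ⟨a, b, hi, -, hj⟩ := h
  exact prefers_asymm hi hj

lemma Dissents.ne_right {i j k : Fin m} (h : Dissents P j i k) : j ≠ k := by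
  rintro rfl
  obtain ⟨a, b, -, hk, hj⟩ := h
  exact prefers_asymm hk hj

lemma SingleCrossingWrt.not_dissents_of_between {lt : Fin m → Fin m → Prop}
    (h : SingleCrossingWrt P lt) {i j k : Fin m} (hbtw : lt i j ∧ lt j k ∨ lt k j ∧ lt j i) :
    ¬ Dissents P j i k := by
  rintro ⟨a, b, hi, hk, hj⟩
  refine prefers_asymm hj ?_
  rcases hbtw with ⟨hij, hjk⟩ | ⟨hkj, hji⟩
  · exact h a b i j k hij hjk hi hk
  · exact h a b k j i hkj hji hk hi

end Profile

lemma one_between_of_three_ne {α : Type*} [LinearOrder α] {x y z : α}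
    (hxy : x ≠ y) (hxz : x ≠ z) (hyz : y ≠ z) :
    (y < x ∧ x < z ∨ z < x ∧ x < y) ∨ (x < y ∧ y < z ∨ z < y ∧ y < x) ∨
      (x < z ∧ z < y ∨ y < z ∧ z < x) := by
  rcases hxy.lt_or_gt with hxy | hxy <;> rcases hxz.lt_or_gt with hxz | hxz <;>
    rcases hyz.lt_or_gt with hyz | hyz <;> simp_all [lt_asymm]

theorem not_singleCrossingWrt_of_dissents {m n : ℕ} {P : Fin m → Fin n ≃ Fin n}
    {α : Type*} [LinearOrder α] {σ : Fin m → α} (hσ : Function.Injective σ) {i j k : Fin m}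
    (hi : Dissents P i j k) (hj : Dissents P j i k) (hk : Dissents P k i j) :
    ¬ SingleCrossingWrt P (fun x y => σ x < σ y) := by
  intro h
  rcases one_between_of_three_ne (hσ.ne hi.ne_left) (hσ.ne hi.ne_right) (hσ.ne hj.ne_right) with
    hbtw | hbtw | hbtw
  · exact h.not_dissents_of_between hbtw hi
  · exact h.not_dissents_of_between hbtw hj
  · exact h.not_dissents_of_between hbtw hk

theorem gamma_subprofile_not_sc_general (m n : ℕ) (P : Fin m → Fin n ≃ Fin n)
    (a b c d e f : Fin n) (i j k : Fin m)
    (hi : prefers (P i) a b ∧ prefers (P i) c d ∧ prefers (P i) e f)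
    (hj : prefers (P j) b a ∧ prefers (P j) d c ∧ prefers (P j) e f)
    (hk : prefers (P k) a b ∧ prefers (P k) d c ∧ prefers (P k) f e) :
    ¬ ∃ σ : Fin m ≃ Fin m, SingleCrossingWrt P (fun x y => σ x < σ y) := by
  rintro ⟨σ, h⟩
  obtain ⟨hiab, hicd, hief⟩ := hi
  obtain ⟨hjba, hjdc, hjef⟩ := hj
  obtain ⟨hkab, hkdc, hkfe⟩ := hk
  exact not_singleCrossingWrt_of_dissents σ.injective
    ⟨d, c, hjdc, hkdc, hicd⟩ ⟨a, b, hiab, hkab, hjba⟩ ⟨e, f, hief, hjef, hkfe⟩ h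

/-- A profile containing a `γ`-subprofile (three pairs of alternatives `{a,b}`, `{c,d}`,
`{e,f}` and three voters `i, j, k` with `a ≻ᵢ b`, `c ≻ᵢ d`, `e ≻ᵢ f`; `b ≻ⱼ a`,
`d ≻ⱼ c`, `e ≻ⱼ f`; `a ≻ₖ b`, `d ≻ₖ c`, `f ≻ₖ e`) is not single-crossing. -/
theorem gamma_subprofile_not_sc (m n : ℕ) (P : Fin m → Fin n ≃ Fin n)
    (a b c d e f : Fin n) (i j k : Fin m)
    (hab : a ≠ b) (hcd : c ≠ d) (hef : e ≠ f)
    (hi : prefers (P i) a b ∧ prefers (P i) c d ∧ prefers (P i) e f)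
    (hj : prefers (P j) b a ∧ prefers (P j) d c ∧ prefers (P j) e f)
    (hk : prefers (P k) a b ∧ prefers (P k) d c ∧ prefers (P k) f e) :
    ¬ ∃ σ : Fin m ≃ Fin m, SingleCrossingWrt P (fun x y => σ x < σ y) :=
  gamma_subprofile_not_sc_general m n P a b c d e f i j k hi hj hk
end
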